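/- arXiv:1811.10461 — 3 statements merged into one kernel-verified Lean document; each statement's English description precedes it below -/
import Mathlib

section
/- Let G be a finite group, D a strongly connected nonempty digraph on a subset of G^σ, and D_× the derived digraph with vertex set V(D) × G, where ((u,s),(v,t)) is an arc iff (u,v) is an arc of D and s + v(σ) = t. Then the strongly connected components of D_× are exactly its weakly connected components; i.e., if there is a directed walk from vertex x to vertex y in D_×, then there is also a directed walk from y to x. -/
/-- The derived digraph of a de Bruijn subgraph over a finite group `G`: vertices are pairs
`(u, s)` of a `(σ+1)`-tuple over `G` and a running total `s`, with an arc from `(u,s)` to `(v,t)`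
iff `(u,v)` is an arc of the base digraph and `s + v(last) = t`. -/
def derivedRel {G : Type*} [AddGroup G] {σ : ℕ}
    (E : (Fin (σ + 1) → G) → (Fin (σ + 1) → G) → Prop) :
    ((Fin (σ + 1) → G) × G) → ((Fin (σ + 1) → G) × G) → Prop :=
  fun p q => E p.1 q.1 ∧ p.2 + q.1 (Fin.last σ) = q.2

section Aux

variable {G : Type*} [AddGroup G] {σ : ℕ}
  {E : (Fin (σ + 1) → G) → (Fin (σ + 1) → G) → Prop}

/-- Reachability in the derived digraph is invariant under left translation. -/
lemma derived_translate (g : G) {p q : (Fin (σ + 1) → G) × G}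
    (h : Relation.ReflTransGen (derivedRel E) p q) :
    Relation.ReflTransGen (derivedRel E) (p.1, g + p.2) (q.1, g + q.2) := by
  induction h with
  | refl => exact .refl
  | tail _ step ih =>
      exact ih.tail ⟨step.1, by rw [add_assoc, step.2]⟩

/-- Projection of a derived walk to the base digraph. -/
lemma derived_proj {p q : (Fin (σ + 1) → G) × G}
    (h : Relation.ReflTransGen (derivedRel E) p q) :
    Relation.ReflTransGen E p.1 q.1 := by
  induction h with
  | refl => exact .refl
  | tail _ step ih => exact ih.tail step.1

/-- Lift a base walk to a derived walk starting at any running total. -/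
lemma derived_lift {u v : Fin (σ + 1) → G} (h : Relation.ReflTransGen E u v) (s : G) :
    ∃ t, Relation.ReflTransGen (derivedRel E) (u, s) (v, t) := by
  induction h with
  | refl => exact ⟨s, .refl⟩
  | @tail b c _ step ih =>
      obtain ⟨t, ht⟩ := ih
      exact ⟨t + c (Fin.last σ), ht.tail ⟨step, rfl⟩⟩

omit [AddGroup G] in
lemma memV (V : Set (Fin (σ + 1) → G)) (hEV : ∀ u v, E u v → u ∈ V ∧ v ∈ V)
    {a b : Fin (σ + 1) → G} (h : Relation.ReflTransGen E a b) (ha : a ∈ V) : b ∈ V := by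
  induction h with
  | refl => exact ha
  | tail _ step _ => exact (hEV _ _ step).2

lemma derived_nsmul {u : Fin (σ + 1) → G} {t : G}
    (h : Relation.ReflTransGen (derivedRel E) (u, (0 : G)) (u, t)) (n : ℕ) :
    Relation.ReflTransGen (derivedRel E) (u, (0 : G)) (u, n • t) := by
  induction n with
  | zero => simpa using Relation.ReflTransGen.refl
  | succ n ih =>
      have := derived_translate (E := E) (n • t) h
      simp only [add_zero] at this
      rw [succ_nsmul]
      exact ih.trans this

end Aux

/-- If `D` is a strongly connected nonempty digraph on a subset of tuples over a finite group
`G`, then in the derived digraph `D_×` any directed walk from `x` to `y` can be reversed: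
the strong components of `D_×` coincide with its weak components. -/
theorem stmt_2 {G : Type*} [AddGroup G] [Fintype G] {σ : ℕ}
    (V : Set (Fin (σ + 1) → G)) (E : (Fin (σ + 1) → G) → (Fin (σ + 1) → G) → Prop)
    (hEV : ∀ u v, E u v → u ∈ V ∧ v ∈ V)
    (hne : V.Nonempty)
    (hstrong : ∀ u ∈ V, ∀ v ∈ V, Relation.ReflTransGen E u v)
    (x y : (Fin (σ + 1) → G) × G)
    (hxy : Relation.ReflTransGen (derivedRel E) x y) :
    Relation.ReflTransGen (derivedRel E) y x := by
  rcases hxy.cases_head with rfl | ⟨z, hxz, hzy⟩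
  · exact .refl
  have hx1 : x.1 ∈ V := (hEV _ _ hxz.1).1
  have hz1 : z.1 ∈ V := (hEV _ _ hxz.1).2
  have hy1 : y.1 ∈ V := memV V hEV (derived_proj hzy) hz1
  -- the normalized walk from (x.1, 0) to (y.1, c) with c = -x.2 + y.2
  have h1 : Relation.ReflTransGen (derivedRel E) (x.1, (0 : G)) (y.1, -x.2 + y.2) := by
    have := derived_translate (E := E) (-x.2) hxy
    simpa using this
  -- return walk in the base graph, lifted
  obtain ⟨t, h2⟩ := derived_lift (hstrong _ hy1 _ hx1) (-x.2 + y.2)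
  -- t is an achievable increment at x.1
  have hS : Relation.ReflTransGen (derivedRel E) (x.1, (0 : G)) (x.1, t) := h1.trans h2
  -- hence so is -t, since G is finite
  have hneg : Relation.ReflTransGen (derivedRel E) (x.1, (0 : G)) (x.1, -t) := by
    have hpos : 0 < addOrderOf t := addOrderOf_pos t
    have h3 := derived_nsmul hS (addOrderOf t - 1)
    have : (addOrderOf t - 1) • t = -t := by
      apply eq_neg_of_add_eq_zero_left
      rw [← succ_nsmul, Nat.sub_add_cancel hpos, addOrderOf_nsmul_eq_zero]
    rwa [this] at h3
  -- assemble: y = (y.1, x.2 + (-x.2 + y.2)) reaches (x.1, x.2 + t) reaches (x.1, x.2) = x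
  have h4 : Relation.ReflTransGen (derivedRel E) (y.1, x.2 + (-x.2 + y.2)) (x.1, x.2 + t) :=
    derived_translate (E := E) x.2 h2
  have h5 : Relation.ReflTransGen (derivedRel E) (x.1, x.2 + t) (x.1, x.2) := by
    have := derived_translate (E := E) (x.2 + t) hneg
    simpa [add_assoc] using this
  have h6 := h4.trans h5
  simpa using h6
end

section
/- Let G be an abelian group and D a digraph on σ-tuples over G with derived digraph D_×. Define the automorphism f of D_× by f(v, b) = (v, a + b) for a fixed a ∈ G. If f maps some vertex into its own strong component (i.e., there is a directed walk from (v,b) to (v,a+b) for some vertex (v,b)), then f maps every vertex into its own strong component. -/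
/-!
A walk `(u, 0) ⇝ (u, a)` in `D_×` is a closed walk at `u` in `D` of net voltage `a`. These
voltages form a submonoid of `G`, hence a subgroup as `G` is finite. Translating walks by
`(w, r) ↦ (w, c + r)` shows that there is a walk `(u, c) ⇝ (u, a + c)` for one `c` iff there is
one for every `c` iff `a` is such a voltage at `u`. Conjugating closed walks at `v` by walks `u ⇝ v ⇝ u` in the strongly connected
`D` turns a voltage `a` at `v` into `s + a + t` at `u`, where `s + t` is also a voltage at `u`;
since `G` is abelian, `a` itself is then a voltage at `u`.
-/

theorem AddSubmonoid.neg_mem_of_finite {G : Type*} [AddGroup G] [Finite G] (S : AddSubmonoid G)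
    {x : G} (hx : x ∈ S) : -x ∈ S := by
  obtain ⟨n, hn⟩ := (isOfFinAddOrder_of_finite x).mem_multiples_iff_mem_zmultiples.2
    (neg_mem (AddSubgroup.mem_zmultiples x))
  exact hn ▸ nsmul_mem hx n

namespace derivedRel

variable {G : Type*} [AddGroup G] {σ : ℕ} {E : (Fin (σ + 1) → G) → (Fin (σ + 1) → G) → Prop}

theorem reflTransGen_vadd {u v : Fin (σ + 1) → G} {r s : G}
    (h : Relation.ReflTransGen (derivedRel E) (u, r) (v, s)) (c : G) :
    Relation.ReflTransGen (derivedRel E) (u, c + r) (v, c + s) :=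
  h.lift (fun p => (p.1, c + p.2)) fun _ _ hpq => ⟨hpq.1, by rw [add_assoc, hpq.2]⟩

theorem reflTransGen_trans_vadd {u v w : Fin (σ + 1) → G} {r s t : G}
    (h₁ : Relation.ReflTransGen (derivedRel E) (u, r) (v, s))
    (h₂ : Relation.ReflTransGen (derivedRel E) (v, 0) (w, t)) :
    Relation.ReflTransGen (derivedRel E) (u, r) (w, s + t) :=
  h₁.trans (by simpa using reflTransGen_vadd h₂ s)

theorem exists_reflTransGen_of_reflTransGen {u v : Fin (σ + 1) → G}
    (h : Relation.ReflTransGen E u v) : ∃ d, Relation.ReflTransGen (derivedRel E) (u, 0) (v, d) := by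
  induction h with
  | refl => exact ⟨0, .refl⟩
  | @tail w x _ hwx ih =>
    obtain ⟨d, hd⟩ := ih
    exact ⟨d + x (Fin.last σ), hd.tail ⟨hwx, rfl⟩⟩

variable (E) in
def closedWalkVoltages (u : Fin (σ + 1) → G) : AddSubmonoid G where
  carrier := {a | Relation.ReflTransGen (derivedRel E) (u, 0) (u, a)}
  zero_mem' := .refl
  add_mem' ha hb := reflTransGen_trans_vadd ha hb

@[simp]
theorem mem_closedWalkVoltages {u : Fin (σ + 1) → G} {a : G} :
    a ∈ closedWalkVoltages E u ↔ Relation.ReflTransGen (derivedRel E) (u, 0) (u, a) :=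
  Iff.rfl

theorem mem_closedWalkVoltages_iff_forall {u : Fin (σ + 1) → G} {a : G} :
    a ∈ closedWalkVoltages E u ↔
      ∀ c, Relation.ReflTransGen (derivedRel E) (u, c) (u, c + a) :=
  ⟨fun h c => by simpa using reflTransGen_vadd h c, fun h => by simpa using h 0⟩

end derivedRel

open derivedRel

theorem closedWalkVoltages_le_of_reflTransGen {G : Type*} [AddCommGroup G] [Finite G] {σ : ℕ}
    {E : (Fin (σ + 1) → G) → (Fin (σ + 1) → G) → Prop} {u v : Fin (σ + 1) → G}
    (huv : Relation.ReflTransGen E u v) (hvu : Relation.ReflTransGen E v u) :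
    closedWalkVoltages E v ≤ closedWalkVoltages E u := by
  intro a ha
  obtain ⟨s, hs⟩ := exists_reflTransGen_of_reflTransGen huv
  obtain ⟨t, ht⟩ := exists_reflTransGen_of_reflTransGen hvu
  have hst : s + t ∈ closedWalkVoltages E u := reflTransGen_trans_vadd hs ht
  have hsat : s + a + t ∈ closedWalkVoltages E u :=
    reflTransGen_trans_vadd (reflTransGen_trans_vadd hs ha) ht
  have := add_mem hsat ((closedWalkVoltages E u).neg_mem_of_finite hst)
  rwa [show s + a + t + -(s + t) = a by abel] at this

theorem stmt_4_general {G : Type*} [AddCommGroup G] [Fintype G] {σ : ℕ}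
    (V : Set (Fin (σ + 1) → G)) (E : (Fin (σ + 1) → G) → (Fin (σ + 1) → G) → Prop)
    (hstrong : ∀ u ∈ V, ∀ v ∈ V, Relation.ReflTransGen E u v)
    (a : G)
    (hsome : ∃ (v : Fin (σ + 1) → G) (b : G), v ∈ V ∧
      Relation.ReflTransGen (derivedRel E) (v, b) (v, a + b)) :
    ∀ u : Fin (σ + 1) → G, u ∈ V → ∀ c : G,
      Relation.ReflTransGen (derivedRel E) (u, c) (u, a + c) := by
  obtain ⟨v, b, hv, hloop⟩ := hsome
  have hav : a ∈ closedWalkVoltages E v := by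
    simpa using reflTransGen_vadd hloop (-b)
  intro u hu c
  have hau := closedWalkVoltages_le_of_reflTransGen (hstrong u hu v hv) (hstrong v hv u hu) hav
  simpa [add_comm c a] using mem_closedWalkVoltages_iff_forall.1 hau c

/-- For abelian `G` and strongly connected base digraph `D`: if the translation automorphism
`f(v, b) = (v, a + b)` of the derived digraph maps some vertex into its own strong component
(there is a directed walk from `(v, b)` to `(v, a + b)`), then it maps every vertex into its
own strong component. -/
theorem stmt_4 {G : Type*} [AddCommGroup G] [Fintype G] {σ : ℕ}
    (V : Set (Fin (σ + 1) → G)) (E : (Fin (σ + 1) → G) → (Fin (σ + 1) → G) → Prop)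
    (hEV : ∀ u v, E u v → u ∈ V ∧ v ∈ V)
    (hstrong : ∀ u ∈ V, ∀ v ∈ V, Relation.ReflTransGen E u v)
    (a : G)
    (hsome : ∃ (v : Fin (σ + 1) → G) (b : G), v ∈ V ∧
      Relation.ReflTransGen (derivedRel E) (v, b) (v, a + b)) :
    ∀ u : Fin (σ + 1) → G, u ∈ V → ∀ c : G,
      Relation.ReflTransGen (derivedRel E) (u, c) (u, a + c) :=
  stmt_4_general V E hstrong a hsome
end

section
/- The number of gap-free k-ary words of length m with exactly j distinct letters is (k - j + 1) · j! · S(m, j), where S(m,j) is the Stirling number of the second kind; hence the total number of gap-free k-ary words of length m is Σ_{j=1}^k (k-j+1) j! S(m,j), which is asymptotic to k^m as m → ∞. -/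
/-!
A word with letter set `s` is a surjection onto `s`. Splitting off the first letter `a`, the rest of
the word has letter set `s` or `s.erase a`, which is the recurrence of `S`, so there are
`|s|! S(m, |s|)` such words. A gap-free set of size `j ≥ 1` in `Fin k` is one of the `k - j + 1`
intervals of length `j`; summing over these gives the exact counts. Every surjective word is
gap-free and at most `k (k-1)^m` words miss a letter, so the proportion of gap-free words lies
between `1 - k ((k-1)/k)^m` and `1`.
-/

/-- Stirling numbers of the second kind. -/
def stirling2 : ℕ → ℕ → ℕ
  | 0, 0 => 1
  | 0, _ + 1 => 0
  | _ + 1, 0 => 0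
  | m + 1, j + 1 => (j + 1) * stirling2 m (j + 1) + stirling2 m j

open Finset Filter
open scoped Nat Topology

lemma factorial_mul_stirling2_succ (m j : ℕ) :
    (j + 1) * ((j + 1)! * stirling2 m (j + 1) + j ! * stirling2 m j)
      = (j + 1)! * stirling2 (m + 1) (j + 1) := by
  rw [stirling2, Nat.factorial_succ]; ring

section Words

variable {β : Type*} [DecidableEq β]

lemma image_univ_fin_cons {m : ℕ} (a : β) (f : Fin m → β) :
    image (Fin.cons a f : Fin (m + 1) → β) univ = insert a (image f univ) := by
  ext b; simp [Fin.exists_fin_succ, eq_comm]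

lemma insert_eq_iff_of_mem {a : β} {s t : Finset β} (ha : a ∈ s) :
    insert a t = s ↔ t = s ∨ t = s.erase a := by
  constructor
  · intro h
    by_cases hat : a ∈ t
    · exact Or.inl (by rwa [insert_eq_of_mem hat] at h)
    · exact Or.inr (by rw [← h, erase_insert hat])
  · rintro (rfl | rfl)
    · exact insert_eq_of_mem ha
    · exact insert_erase ha

variable [Fintype β]

lemma card_filter_insert_image_eq {m : ℕ} {a : β} {s : Finset β} (ha : a ∈ s) :
    #{f : Fin m → β | insert a (image f univ) = s}
      = #{f : Fin m → β | image f univ = s} + #{f : Fin m → β | image f univ = s.erase a} := by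
  rw [filter_congr fun f _ => insert_eq_iff_of_mem ha, filter_or, card_union_of_disjoint]
  rw [disjoint_filter]
  rintro f - rfl h
  exact notMem_erase a _ (h ▸ ha)

lemma card_filter_image_eq_succ (m : ℕ) (s : Finset β) :
    #{w : Fin (m + 1) → β | image w univ = s}
      = ∑ a ∈ s, (#{f : Fin m → β | image f univ = s}
          + #{f : Fin m → β | image f univ = s.erase a}) := by
  have hcons : #{w : Fin (m + 1) → β | image w univ = s}
      = #{p : β × (Fin m → β) | insert p.1 (image p.2 univ) = s} := by
    refine card_equiv (Fin.consEquiv fun _ => β).symm fun w => ?_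
    simp only [mem_filter, mem_univ, true_and, Fin.consEquiv_symm_apply]
    rw [← image_univ_fin_cons, Fin.cons_self_tail]
  have hout : ∀ a ∉ s, #{f : Fin m → β | insert a (image f univ) = s} = 0 := fun a ha =>
    card_eq_zero.mpr <| filter_false_of_mem fun f _ h => ha (h ▸ mem_insert_self a _)
  rw [hcons, card_filter, Fintype.sum_prod_type]
  simp_rw [← card_filter]
  rw [← sum_subset (subset_univ s) fun a _ ha => hout a ha]
  exact sum_congr rfl fun a ha => card_filter_insert_image_eq ha

theorem card_filter_image_eq (m : ℕ) (s : Finset β) :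
    #{w : Fin m → β | image w univ = s} = (#s)! * stirling2 m #s := by
  induction m generalizing s with
  | zero =>
    rcases s.eq_empty_or_nonempty with rfl | hs
    · simp [stirling2]
    · obtain ⟨j, hj⟩ := Nat.exists_eq_succ_of_ne_zero hs.card_pos.ne'
      rw [filter_false_of_mem fun w _ => by simpa using hs.ne_empty.symm]
      simp [hj, stirling2]
  | succ m ih =>
    rw [card_filter_image_eq_succ]
    simp_rw [ih]
    rw [sum_congr rfl fun a ha => by rw [card_erase_of_mem ha], sum_const, smul_eq_mul]
    rcases (#s).eq_zero_or_eq_succ_pred with hs | hs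
    · simp [hs, stirling2]
    · rw [hs]; exact factorial_mul_stirling2_succ m _

theorem card_filter_image_eq_sum (m : ℕ) (P : Finset β → Prop) [DecidablePred P] :
    #{w : Fin m → β | P (image w univ)} = ∑ s with P s, (#s)! * stirling2 m #s := by
  rw [card_eq_sum_card_fiberwise (f := fun w => image w univ) (t := {s | P s})
    fun w hw => by simpa using hw]
  refine sum_congr rfl fun s hs => ?_
  rw [filter_filter, ← card_filter_image_eq]
  congr 1
  exact filter_congr fun w _ => ⟨And.right, fun h => ⟨h ▸ (mem_filter.mp hs).2, h⟩⟩

end Words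

lemma card_filter_exists_Icc_card_eq {k j : ℕ} (hj : 1 ≤ j) (hjk : j ≤ k) :
    #{s : Finset (Fin k) | (∃ a b : Fin k, s = Icc a b) ∧ #s = j} = k - j + 1 := by
  set I : Fin (k - j + 1) → Finset (Fin k) := fun i => Icc ⟨i, by omega⟩ ⟨i + j - 1, by omega⟩
  have hI : ({s | (∃ a b : Fin k, s = Icc a b) ∧ #s = j} : Finset (Finset (Fin k)))
      = univ.image I := by
    ext s
    simp only [mem_filter, mem_univ, true_and, mem_image, I]
    constructor
    · rintro ⟨⟨a, b, rfl⟩, hab⟩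
      rw [Fin.card_Icc] at hab
      exact ⟨⟨a, by omega⟩, by congr 1; ext; simp; omega⟩
    · rintro ⟨i, -, rfl⟩
      exact ⟨⟨_, _, rfl⟩, by rw [Fin.card_Icc]; simp; omega⟩
  rw [hI, card_image_of_injective, card_univ, Fintype.card_fin]
  intro i i' h
  have hmem (i : Fin (k - j + 1)) : (⟨i, by omega⟩ : Fin k) ∈ I i :=
    left_mem_Icc.mpr (Fin.mk_le_mk.mpr (by omega))
  have hi := h ▸ hmem i
  have hi' := h.symm ▸ hmem i'
  simp only [I, mem_Icc, Fin.mk_le_mk] at hi hi'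
  omega

lemma card_filter_not_surjective_le {α γ : Type*} [Fintype α] [DecidableEq α] [Fintype γ]
    [DecidableEq γ] :
    #{f : α → γ | ¬ Function.Surjective f}
      ≤ Fintype.card γ * (Fintype.card γ - 1) ^ Fintype.card α := by
  have hmiss (c : γ) : #{f : α → γ | ∀ x, f x ≠ c} = (Fintype.card γ - 1) ^ Fintype.card α := by
    have : ({f | ∀ x, f x ≠ c} : Finset (α → γ))
        = Fintype.piFinset fun _ => ({c}ᶜ : Finset γ) := by
      ext f; simp [Fintype.mem_piFinset]
    simp [this, card_compl]
  have hsub : ({f | ¬ Function.Surjective f} : Finset (α → γ)) ⊆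
      univ.biUnion fun c => {f | ∀ x, f x ≠ c} := by
    intro f hf
    simpa [Function.Surjective] using hf
  calc _ ≤ _ := card_le_card hsub
    _ ≤ _ := card_biUnion_le
    _ = _ := by simp [hmiss]

lemma pow_le_card_filter_image_add {β : Type*} [Fintype β] [DecidableEq β] (m : ℕ)
    (P : Finset β → Prop) [DecidablePred P] (huniv : P univ) :
    Fintype.card β ^ m
      ≤ #{w : Fin m → β | P (image w univ)} + Fintype.card β * (Fintype.card β - 1) ^ m := by
  have hnot : #{w : Fin m → β | ¬ P (image w univ)}
      ≤ #{w : Fin m → β | ¬ Function.Surjective w} :=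
    card_le_card <| monotone_filter_right _ fun w _ hP hw =>
      hP (by rwa [image_univ_of_surjective hw])
  have hsplit := card_filter_add_card_filter_not (s := univ) fun w : Fin m → β => P (image w univ)
  have hsurj := card_filter_not_surjective_le (α := Fin m) (γ := β)
  simp only [card_univ, Fintype.card_fun, Fintype.card_fin] at hsplit hsurj
  omega

lemma tendsto_cast_div_pow_nhds_one {k : ℕ} (hk : 1 ≤ k) {a : ℕ → ℕ} (hle : ∀ m, a m ≤ k ^ m)
    (hge : ∀ m, k ^ m ≤ a m + k * (k - 1) ^ m) :
    Tendsto (fun m => (a m : ℝ) / (k : ℝ) ^ m) atTop (𝓝 1) := by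
  have hk0 : (0 : ℝ) < k := by exact_mod_cast hk
  set r : ℝ := ((k - 1 : ℕ) : ℝ) / k
  have hr1 : r < 1 := by
    rw [div_lt_one hk0]
    exact_mod_cast Nat.sub_lt hk one_pos
  have hlower : Tendsto (fun m : ℕ => 1 - (k : ℝ) * r ^ m) atTop (𝓝 1) := by
    simpa using tendsto_const_nhds.sub
      ((tendsto_pow_atTop_nhds_zero_of_lt_one (by positivity) hr1).const_mul (k : ℝ))
  refine tendsto_of_tendsto_of_tendsto_of_le_of_le hlower tendsto_const_nhds
    (fun m => ?_) fun m => ?_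
  · have hge' : (k : ℝ) ^ m ≤ a m + k * ((k - 1 : ℕ) : ℝ) ^ m := by exact_mod_cast hge m
    rw [div_pow, le_div_iff₀ (by positivity), sub_mul, mul_assoc,
      div_mul_cancel₀ _ (by positivity)]
    linarith
  · rw [div_le_one (by positivity)]
    exact_mod_cast hle m

theorem card_gapFree_card_eq {k : ℕ} (m : ℕ) {j : ℕ} (hj : 1 ≤ j) (hjk : j ≤ k) :
    #{w : Fin m → Fin k | (∃ a b : Fin k, image w univ = Icc a b) ∧ #(image w univ) = j}
      = (k - j + 1) * j ! * stirling2 m j := by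
  rw [card_filter_image_eq_sum m fun s => (∃ a b : Fin k, s = Icc a b) ∧ #s = j,
    sum_congr rfl fun s hs => by rw [(mem_filter.mp hs).2.2], sum_const, smul_eq_mul,
    card_filter_exists_Icc_card_eq hj hjk, mul_assoc]

theorem card_gapFree_eq_sum {k m : ℕ} (hm : 1 ≤ m) :
    #{w : Fin m → Fin k | ∃ a b : Fin k, image w univ = Icc a b}
      = ∑ j ∈ Icc 1 k, (k - j + 1) * j ! * stirling2 m j := by
  have : Nonempty (Fin m) := Fin.pos_iff_nonempty.mp hm
  rw [card_eq_sum_card_fiberwise (f := fun w => #(image w univ)) (t := Icc 1 k) fun w _ =>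
    mem_Icc.mpr ⟨(univ_nonempty.image w).card_pos, (card_le_univ _).trans (Fintype.card_fin k).le⟩]
  refine sum_congr rfl fun j hj => ?_
  rw [filter_filter]
  exact card_gapFree_card_eq m (mem_Icc.mp hj).1 (mem_Icc.mp hj).2

theorem tendsto_card_gapFree_div_pow {k : ℕ} (hk : 1 ≤ k) :
    Tendsto (fun m : ℕ =>
        (#{w : Fin m → Fin k | ∃ a b : Fin k, image w univ = Icc a b} : ℝ) / (k : ℝ) ^ m)
      atTop (𝓝 1) := by
  obtain ⟨n, rfl⟩ : ∃ n, k = n + 1 := ⟨k - 1, by omega⟩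
  refine tendsto_cast_div_pow_nhds_one hk (fun m => ?_) fun m => ?_
  · simpa using card_filter_le (univ : Finset (Fin m → Fin (n + 1))) _
  · simpa using pow_le_card_filter_image_add m
      (fun s : Finset (Fin (n + 1)) => ∃ a b, s = Icc a b) ⟨⊥, ⊤, Icc_bot_top.symm⟩

/-- The number of gap-free `k`-ary `m`-words with exactly `j` distinct letters is
`(k - j + 1)·j!·S(m,j)`; hence the total number of gap-free `k`-ary `m`-words is
`Σ_{j=1}^k (k-j+1) j! S(m,j)`, which is asymptotic to `k^m` as `m → ∞`. -/
theorem stmt_11 (k : ℕ) (hk : 1 ≤ k) :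
    (∀ m j : ℕ, 1 ≤ j → j ≤ k →
      (Finset.univ.filter (fun w : Fin m → Fin k =>
          (∃ a b : Fin k, Finset.image w Finset.univ = Finset.Icc a b) ∧
          (Finset.image w Finset.univ).card = j)).card
        = (k - j + 1) * j.factorial * stirling2 m j) ∧
    (∀ m : ℕ, 1 ≤ m →
      (Finset.univ.filter (fun w : Fin m → Fin k =>
          ∃ a b : Fin k, Finset.image w Finset.univ = Finset.Icc a b)).card
        = ∑ j ∈ Finset.Icc 1 k, (k - j + 1) * j.factorial * stirling2 m j) ∧
    Filter.Tendsto (fun m : ℕ =>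
        ((Finset.univ.filter (fun w : Fin m → Fin k =>
            ∃ a b : Fin k, Finset.image w Finset.univ = Finset.Icc a b)).card : ℝ)
          / (k : ℝ) ^ m)
      Filter.atTop (nhds 1) :=
  ⟨fun m _ => card_gapFree_card_eq m, fun _ => card_gapFree_eq_sum,
    tendsto_card_gapFree_div_pow hk⟩
end
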